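/- Let f_L, f_R : ℝ → ℝ be twice continuously differentiable with f_L'' Lipschitz with constant M_L and f_R'' Lipschitz with constant M_R, let f(y) = max(f_L(y), f_R(y)) for all y ∈ ℝ, suppose f_L'(0) < 0 < f_R'(0), and let α > max(M_L, M_R)/2 with h = max(r3 − l1, r1 − l3). Then there exists ε > 0 such that for every extended bracket (l3, l2, l1, m, r1, r2, r3) for f whose seven points all lie in (−ε, ε) and which satisfies f(l_j) = f_L(l_j) and f(r_j) = f_R(r_j) for j = 1, 2, 3, the following holds: q^L is strictly decreasing on [l1, r1], q^R is strictly increasing on [l1, r1], and there is exactly one x ∈ (l1, r1) with q^L(x) = q^R(x). -/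

import Mathlib

/-- First divided difference. -/
noncomputable def dd2 (φ : ℝ → ℝ) (a b : ℝ) : ℝ := (φ a - φ b) / (a - b)

/-- Second divided difference. -/
noncomputable def dd3 (φ : ℝ → ℝ) (a b c : ℝ) : ℝ := (dd2 φ a b - dd2 φ a c) / (b - c)

/-- The left model quadratic. -/
noncomputable def qL (fL : ℝ → ℝ) (l1 l2 l3 α h x : ℝ) : ℝ :=
  fL l1 + dd2 fL l1 l2 * (x - l1) + (dd3 fL l1 l2 l3 - α * h) * (x - l1) * (x - l2)

/-- The right model quadratic. -/
noncomputable def qR (fR : ℝ → ℝ) (r1 r2 r3 α h x : ℝ) : ℝ :=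
  fR r1 + dd2 fR r1 r2 * (x - r1) + (dd3 fR r1 r2 r3 - α * h) * (x - r1) * (x - r2)

lemma dd2_comm (φ : ℝ → ℝ) (a b : ℝ) : dd2 φ a b = dd2 φ b a := by
  unfold dd2
  rw [show φ b - φ a = -(φ a - φ b) by ring, show b - a = -(a - b) by ring, neg_div_neg_eq]

lemma dd3_rev (φ : ℝ → ℝ) {a b c : ℝ} (hab : a ≠ b) (hac : a ≠ c) (hbc : b ≠ c) :
    dd3 φ a b c = dd3 φ c b a := by
  have h1 : a - b ≠ 0 := sub_ne_zero.mpr hab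
  have h2 : a - c ≠ 0 := sub_ne_zero.mpr hac
  have h3 : b - c ≠ 0 := sub_ne_zero.mpr hbc
  have h4 : c - b ≠ 0 := sub_ne_zero.mpr hbc.symm
  have h5 : c - a ≠ 0 := sub_ne_zero.mpr hac.symm
  have h6 : b - a ≠ 0 := sub_ne_zero.mpr hab.symm
  unfold dd3 dd2
  field_simp
  ring

lemma dd3_swap12 (φ : ℝ → ℝ) {a b c : ℝ} (hab : a ≠ b) (hac : a ≠ c) (hbc : b ≠ c) :
    dd3 φ a b c = dd3 φ b a c := by
  have h1 : a - b ≠ 0 := sub_ne_zero.mpr hab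
  have h2 : a - c ≠ 0 := sub_ne_zero.mpr hac
  have h3 : b - c ≠ 0 := sub_ne_zero.mpr hbc
  have h4 : c - b ≠ 0 := sub_ne_zero.mpr hbc.symm
  have h5 : c - a ≠ 0 := sub_ne_zero.mpr hac.symm
  have h6 : b - a ≠ 0 := sub_ne_zero.mpr hab.symm
  unfold dd3 dd2
  field_simp
  ring

lemma dd3_rot (φ : ℝ → ℝ) {a b c : ℝ} (hab : a ≠ b) (hac : a ≠ c) (hbc : b ≠ c) :
    dd3 φ a b c = dd3 φ c a b := by
  have h1 : a - b ≠ 0 := sub_ne_zero.mpr hab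
  have h2 : a - c ≠ 0 := sub_ne_zero.mpr hac
  have h3 : b - c ≠ 0 := sub_ne_zero.mpr hbc
  have h4 : c - b ≠ 0 := sub_ne_zero.mpr hbc.symm
  have h5 : c - a ≠ 0 := sub_ne_zero.mpr hac.symm
  have h6 : b - a ≠ 0 := sub_ne_zero.mpr hab.symm
  unfold dd3 dd2
  field_simp
  ring

lemma newton_id (φ : ℝ → ℝ) {a b x : ℝ} (hab : a ≠ b) (hax : a ≠ x) (hbx : b ≠ x) :
    φ x = φ a + dd2 φ a b * (x - a) + dd3 φ a b x * ((x - a) * (x - b)) := by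
  have h1 : a - b ≠ 0 := sub_ne_zero.mpr hab
  have h2 : a - x ≠ 0 := sub_ne_zero.mpr hax
  have h3 : b - x ≠ 0 := sub_ne_zero.mpr hbx
  unfold dd3 dd2
  field_simp
  ring

lemma hasDerivAt_quad (c0 c1 c2 a b x : ℝ) :
    HasDerivAt (fun y => c0 + c1 * (y - a) + c2 * (y - a) * (y - b)) (c1 + c2 * (2*x - a - b)) x := by
  have h := (((hasDerivAt_const x c0).add ((hasDerivAt_const x c1).mul
      ((hasDerivAt_id x).sub_const a))).add
      (((hasDerivAt_const x c2).mul ((hasDerivAt_id x).sub_const a)).mul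
      ((hasDerivAt_id x).sub_const b)))
  exact h.congr_deriv (by simp only [Pi.mul_apply, id]; ring)

lemma dd2_mvt (f : ℝ → ℝ) (hf : Continuous f) (hd : Differentiable ℝ f) {a b : ℝ} (hab : a < b) :
    ∃ ξ ∈ Set.Ioo a b, dd2 f b a = deriv f ξ := by
  obtain ⟨c, hc, hc2⟩ := exists_deriv_eq_slope f hab (hf.continuousOn) (hd.differentiableOn)
  exact ⟨c, hc, by rw [hc2]; unfold dd2; rw [show f b - f a = -(f a - f b) by ring,
    show b - a = -(a - b) by ring, neg_div_neg_eq]⟩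

lemma dd3_mvt (f : ℝ → ℝ) (hf : ContDiff ℝ 2 f) {a b c : ℝ} (hab : a < b) (hbc : b < c) :
    ∃ ξ ∈ Set.Ioo a c, dd3 f a b c = deriv (deriv f) ξ / 2 := by
  have hd1 : Differentiable ℝ f := hf.differentiable (by norm_num)
  have hcd : ContDiff ℝ 1 (deriv f) := by
    have := (contDiff_succ_iff_deriv (n := 1)).mp (by norm_num at hf ⊢; exact hf)
    exact this.2.2
  have hd2 : Differentiable ℝ (deriv f) := hcd.differentiable one_ne_zero
  set D2 := dd2 f a b with hD2
  set D3 := dd3 f a b c with hD3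
  set g : ℝ → ℝ := fun x => f x - (f a + D2 * (x - a) + D3 * ((x - a) * (x - b))) with hg
  have hga : g a = 0 := by simp [hg]
  have hgb : g b = 0 := by
    have h1 : a - b ≠ 0 := sub_ne_zero.mpr hab.ne
    simp only [hg, hD2, dd2]
    field_simp
    ring
  have hgc : g c = 0 := by
    have h1 : a - b ≠ 0 := sub_ne_zero.mpr hab.ne
    have h2 : a - c ≠ 0 := sub_ne_zero.mpr (hab.trans hbc).ne
    have h3 : b - c ≠ 0 := sub_ne_zero.mpr hbc.ne
    simp only [hg, hD3, hD2, dd3, dd2]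
    field_simp
    ring
  set g' : ℝ → ℝ := fun x => deriv f x - (D2 + D3 * (2*x - a - b)) with hg'
  have hgd : ∀ x, HasDerivAt g (g' x) x := by
    intro x
    have h1 : HasDerivAt (fun y => f a + D2 * (y - a) + D3 * (y - a) * (y - b))
        (D2 + D3 * (2*x - a - b)) x := hasDerivAt_quad (f a) D2 D3 a b x
    have h2 : HasDerivAt f (deriv f x) x := (hd1 x).hasDerivAt
    have := h2.sub h1
    have e : g = (f - fun y => f a + D2 * (y - a) + D3 * (y - a) * (y - b)) := by
      funext y; simp only [hg, Pi.sub_apply]; ring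
    rw [e]; exact this
  have hderivg : deriv g = g' := funext fun x => (hgd x).deriv
  have hcg : Continuous g := by
    apply hf.continuous.sub
    continuity
  obtain ⟨η₁, hη₁, hη₁'⟩ := exists_deriv_eq_zero hab hcg.continuousOn (hga.trans hgb.symm)
  obtain ⟨η₂, hη₂, hη₂'⟩ := exists_deriv_eq_zero hbc hcg.continuousOn (hgb.trans hgc.symm)
  rw [hderivg] at hη₁' hη₂'
  have hη12 : η₁ < η₂ := hη₁.2.trans hη₂.1
  have hcg' : Continuous g' := by
    apply (hf.continuous_deriv (by norm_num)).sub
    continuity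
  obtain ⟨ξ, hξ, hξ'⟩ := exists_deriv_eq_zero hη12 hcg'.continuousOn (hη₁'.trans hη₂'.symm)
  refine ⟨ξ, ⟨hη₁.1.trans hξ.1, hξ.2.trans hη₂.2⟩, ?_⟩
  have : HasDerivAt g' (deriv (deriv f) ξ - 2 * D3) ξ := by
    have h1 : HasDerivAt (fun y : ℝ => D2 + D3 * (2*y - a - b)) (2 * D3) ξ := by
      have h2 := (hasDerivAt_const ξ D2).add ((hasDerivAt_const ξ D3).mul
          ((((hasDerivAt_id ξ).const_mul 2).sub_const a).sub_const b))
      exact h2.congr_deriv (by ring)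
    exact ((hd2 ξ).hasDerivAt).sub h1
  have h0 : deriv (deriv f) ξ - 2 * D3 = 0 := by rw [← this.deriv]; exact hξ'
  linarith

set_option maxHeartbeats 2000000 in
theorem stmt5 (fL fR f : ℝ → ℝ) (ML MR : ℝ)
    (hfL : ContDiff ℝ 2 fL) (hfR : ContDiff ℝ 2 fR)
    (hLipL : ∀ x y : ℝ, |deriv (deriv fL) x - deriv (deriv fL) y| ≤ ML * |x - y|)
    (hLipR : ∀ x y : ℝ, |deriv (deriv fR) x - deriv (deriv fR) y| ≤ MR * |x - y|)
    (hf : ∀ y : ℝ, f y = max (fL y) (fR y))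
    (hdL : deriv fL 0 < 0) (hdR : 0 < deriv fR 0)
    (α : ℝ) (hα : α > max ML MR / 2) :
    ∃ ε > 0, ∀ l3 l2 l1 m r1 r2 r3 : ℝ,
      l3 < l2 → l2 < l1 → l1 < m → m < r1 → r1 < r2 → r2 < r3 →
      f l1 ≥ f m → f m ≤ f r1 →
      (l3 ∈ Set.Ioo (-ε) ε ∧ l2 ∈ Set.Ioo (-ε) ε ∧ l1 ∈ Set.Ioo (-ε) ε ∧
        m ∈ Set.Ioo (-ε) ε ∧ r1 ∈ Set.Ioo (-ε) ε ∧ r2 ∈ Set.Ioo (-ε) ε ∧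
        r3 ∈ Set.Ioo (-ε) ε) →
      f l1 = fL l1 → f l2 = fL l2 → f l3 = fL l3 →
      f r1 = fR r1 → f r2 = fR r2 → f r3 = fR r3 →
      (StrictAntiOn (qL fL l1 l2 l3 α (max (r3 - l1) (r1 - l3))) (Set.Icc l1 r1) ∧
       StrictMonoOn (qR fR r1 r2 r3 α (max (r3 - l1) (r1 - l3))) (Set.Icc l1 r1) ∧
       ∃! x, x ∈ Set.Ioo l1 r1 ∧
         qL fL l1 l2 l3 α (max (r3 - l1) (r1 - l3)) x
           = qR fR r1 r2 r3 α (max (r3 - l1) (r1 - l3)) x) := by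
  -- basic positivity facts
  have hML : 0 ≤ ML := by
    have h01 := hLipL 0 1
    have h02 := abs_nonneg (deriv (deriv fL) 0 - deriv (deriv fL) 1)
    norm_num at h01
    linarith
  have hMR : 0 ≤ MR := by
    have h01 := hLipR 0 1
    have h02 := abs_nonneg (deriv (deriv fR) 0 - deriv (deriv fR) 1)
    norm_num at h01
    linarith
  have hα0 : 0 < α := by
    have := le_max_left ML MR
    linarith
  have hαML : ML / 2 < α := by
    have := le_max_left ML MR; linarith
  have hαMR : MR / 2 < α := by
    have := le_max_right ML MR; linarith
  have hcontL : Continuous (deriv fL) := hfL.continuous_deriv (by norm_num)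
  have hcontR : Continuous (deriv fR) := hfR.continuous_deriv (by norm_num)
  -- choose ε1 controlling first derivatives
  have hEL : ∀ᶠ t in nhds (0:ℝ), deriv fL t < deriv fL 0 / 2 :=
    Filter.Tendsto.eventually_lt_const (by linarith) (hcontL.tendsto 0)
  have hER : ∀ᶠ t in nhds (0:ℝ), deriv fR 0 / 2 < deriv fR t :=
    Filter.Tendsto.eventually_const_lt (by linarith) (hcontR.tendsto 0)
  obtain ⟨ε1, hε1, hball⟩ := Metric.eventually_nhds_iff.mp (hEL.and hER)
  -- constants
  set K : ℝ := |deriv (deriv fL) 0| + ML + (|deriv (deriv fR) 0| + MR) with hK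
  have hK0 : 0 ≤ K := by positivity
  set C : ℝ := K / 2 + 2 * α with hCdef
  have hC0 : 0 < C := by positivity
  set A : ℝ := min (-deriv fL 0) (deriv fR 0) with hAdef
  have hA0 : 0 < A := lt_min (by linarith) hdR
  refine ⟨min ε1 (min 1 (A / (16 * C))), lt_min hε1 (lt_min one_pos (by positivity)), ?_⟩
  set ε : ℝ := min ε1 (min 1 (A / (16 * C))) with hεdef
  have hεε1 : ε ≤ ε1 := min_le_left _ _
  have hε_one : ε ≤ 1 := le_trans (min_le_right _ _) (min_le_left _ _)
  have hεA : ε ≤ A / (16 * C) := le_trans (min_le_right _ _) (min_le_right _ _)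
  have hε0 : 0 < ε := lt_min hε1 (lt_min one_pos (by positivity))
  -- bound for second derivatives near 0
  have hboundL : ∀ ξ : ℝ, |ξ| ≤ 1 → |deriv (deriv fL) ξ| ≤ K := by
    intro ξ hξ
    have h1 := hLipL ξ 0
    rw [sub_zero] at h1
    have h2 : ML * |ξ| ≤ ML * 1 := mul_le_mul_of_nonneg_left hξ hML
    have h3 := abs_sub_abs_le_abs_sub (deriv (deriv fL) ξ) (deriv (deriv fL) 0)
    have h4 := abs_nonneg (deriv (deriv fR) 0)
    rw [hK]; linarith
  have hboundR : ∀ ξ : ℝ, |ξ| ≤ 1 → |deriv (deriv fR) ξ| ≤ K := by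
    intro ξ hξ
    have h1 := hLipR ξ 0
    rw [sub_zero] at h1
    have h2 : MR * |ξ| ≤ MR * 1 := mul_le_mul_of_nonneg_left hξ hMR
    have h3 := abs_sub_abs_le_abs_sub (deriv (deriv fR) ξ) (deriv (deriv fR) 0)
    have h4 := abs_nonneg (deriv (deriv fL) 0)
    rw [hK]; linarith
  have hder : ∀ t : ℝ, |t| < ε → deriv fL t < deriv fL 0 / 2 ∧ deriv fR 0 / 2 < deriv fR t := by
    intro t ht
    exact hball (by rw [Real.dist_eq, sub_zero]; linarith)
  -- main body
  intro l3 l2 l1 m r1 r2 r3 h32 h21 h1m hm1 h12 h23 hfml hfmr hmem hfl1 hfl2 hfl3 hfr1 hfr2 hfr3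
  obtain ⟨hl3, hl2, hl1, hm, hr1, hr2, hr3⟩ := hmem
  have hl1r1 : l1 < r1 := h1m.trans hm1
  set H : ℝ := max (r3 - l1) (r1 - l3) with hHdef
  have hH1 : r3 - l1 ≤ H := le_max_left _ _
  have hH2 : r1 - l3 ≤ H := le_max_right _ _
  have hHpos : 0 < H := lt_of_lt_of_le (by linarith [hl1r1, h12, h23]) hH1
  have hH2ε : H ≤ 2 * ε := by
    apply max_le
    · have := hr3.2; have := hl1.1; linarith
    · have := hr1.2; have := hl3.1; linarith
  have hH2' : H ≤ 2 := by linarith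
  have hCne : C ≠ 0 := hC0.ne'
  have hεC : ε * C ≤ A / 16 := by
    have h1 := mul_le_mul_of_nonneg_right hεA hC0.le
    have h2 : A / (16 * C) * C = A / 16 := by field_simp
    linarith
  -- absolute values of points
  have habs : ∀ t : ℝ, t ∈ Set.Ioo (-ε) ε → |t| < ε := fun t ht => abs_lt.mpr ⟨ht.1, ht.2⟩
  -- dd2 estimates
  obtain ⟨η, hηmem, hηeq⟩ := dd2_mvt fL hfL.continuous (hfL.differentiable (by norm_num)) h21
  have hηε : |η| < ε := abs_lt.mpr ⟨by have := hl2.1; have := hηmem.1; linarith,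
    by have := hl1.2; have := hηmem.2; linarith⟩
  have hc1L : dd2 fL l1 l2 < -(A/2) := by
    rw [hηeq]
    have h1 := (hder η hηε).1
    have h2 : A ≤ -deriv fL 0 := min_le_left _ _
    linarith
  obtain ⟨η', hη'mem, hη'eq⟩ := dd2_mvt fR hfR.continuous (hfR.differentiable (by norm_num)) h12
  have hη'ε : |η'| < ε := abs_lt.mpr ⟨by have := hr1.1; have := hη'mem.1; linarith,
    by have := hr2.2; have := hη'mem.2; linarith⟩
  have hc1R : A/2 < dd2 fR r2 r1 := by
    rw [hη'eq]
    have h1 := (hder η' hη'ε).2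
    have h2 : A ≤ deriv fR 0 := min_le_right _ _
    linarith
  have hc1R' : A/2 < dd2 fR r1 r2 := by rw [dd2_comm]; exact hc1R
  -- dd3 estimates
  have hmvL : ∃ ξ ∈ Set.Ioo l3 l1, dd3 fL l1 l2 l3 = deriv (deriv fL) ξ / 2 := by
    obtain ⟨ξ, hξ, hξeq⟩ := dd3_mvt fL hfL h32 h21
    exact ⟨ξ, hξ, by rw [dd3_rev fL h21.ne' (h32.trans h21).ne' h32.ne']; exact hξeq⟩
  have hmvR : ∃ ξ ∈ Set.Ioo r1 r3, dd3 fR r1 r2 r3 = deriv (deriv fR) ξ / 2 :=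
    dd3_mvt fR hfR h12 h23
  obtain ⟨ξL, hξLmem, hξLeq⟩ := hmvL
  obtain ⟨ξR, hξRmem, hξReq⟩ := hmvR
  have hξLε : |ξL| < ε := abs_lt.mpr ⟨by have := hl3.1; have := hξLmem.1; linarith,
    by have := hl1.2; have := hξLmem.2; linarith⟩
  have hξRε : |ξR| < ε := abs_lt.mpr ⟨by have := hr1.1; have := hξRmem.1; linarith,
    by have := hr3.2; have := hξRmem.2; linarith⟩
  have hc2L : |dd3 fL l1 l2 l3 - α * H| ≤ C := by
    have h1 : |deriv (deriv fL) ξL| ≤ K := hboundL ξL (by linarith [hξLε])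
    have h2 := abs_le.mp h1
    have h3 : 0 < α * H := mul_pos hα0 hHpos
    have h4 : α * H ≤ α * 2 := mul_le_mul_of_nonneg_left hH2' hα0.le
    rw [hξLeq]
    rw [abs_le]; constructor <;> [skip; skip] <;> (rw [hCdef]; try linarith)
    all_goals linarith
  have hc2R : |dd3 fR r1 r2 r3 - α * H| ≤ C := by
    have h1 : |deriv (deriv fR) ξR| ≤ K := hboundR ξR (by linarith [hξRε])
    have h2 := abs_le.mp h1
    have h3 : 0 < α * H := mul_pos hα0 hHpos
    have h4 : α * H ≤ α * 2 := mul_le_mul_of_nonneg_left hH2' hα0.le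
    rw [hξReq]
    rw [abs_le]; constructor <;> (rw [hCdef]; try linarith)
    all_goals linarith
  -- continuity of quadratics
  have hqLfun : qL fL l1 l2 l3 α H = fun y =>
      fL l1 + dd2 fL l1 l2 * (y - l1) + (dd3 fL l1 l2 l3 - α * H) * (y - l1) * (y - l2) := rfl
  have hqRfun : qR fR r1 r2 r3 α H = fun y =>
      fR r1 + dd2 fR r1 r2 * (y - r1) + (dd3 fR r1 r2 r3 - α * H) * (y - r1) * (y - r2) := rfl
  have hcontqL : Continuous (qL fL l1 l2 l3 α H) := by rw [hqLfun]; fun_prop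
  have hcontqR : Continuous (qR fR r1 r2 r3 α H) := by rw [hqRfun]; fun_prop
  -- derivative bounds on the interval
  have hprodL : ∀ x ∈ Set.Ioo l1 r1, |(dd3 fL l1 l2 l3 - α * H) * (2*x - l1 - l2)| ≤ A/4 := by
    intro x hx
    have hxε : |x| < ε := abs_lt.mpr ⟨by have := hl1.1; have := hx.1; linarith,
      by have := hr1.2; have := hx.2; linarith⟩
    have ht : |2*x - l1 - l2| ≤ 4*ε := by
      rw [abs_le]
      have h1 := abs_lt.mp hxε
      have h2 := hl1.1; have h3 := hl1.2; have h4 := hl2.1; have h5 := hl2.2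
      constructor <;> linarith
    calc |(dd3 fL l1 l2 l3 - α * H) * (2*x - l1 - l2)|
        = |dd3 fL l1 l2 l3 - α * H| * |2*x - l1 - l2| := abs_mul _ _
      _ ≤ C * (4*ε) := mul_le_mul hc2L ht (abs_nonneg _) hC0.le
      _ ≤ A/4 := by have h : C*(4*ε) = 4*(ε*C) := by ring
                    linarith
  have hprodR : ∀ x ∈ Set.Ioo l1 r1, |(dd3 fR r1 r2 r3 - α * H) * (2*x - r1 - r2)| ≤ A/4 := by
    intro x hx
    have hxε : |x| < ε := abs_lt.mpr ⟨by have := hl1.1; have := hx.1; linarith,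
      by have := hr1.2; have := hx.2; linarith⟩
    have ht : |2*x - r1 - r2| ≤ 4*ε := by
      rw [abs_le]
      have h1 := abs_lt.mp hxε
      have h2 := hr1.1; have h3 := hr1.2; have h4 := hr2.1; have h5 := hr2.2
      constructor <;> linarith
    calc |(dd3 fR r1 r2 r3 - α * H) * (2*x - r1 - r2)|
        = |dd3 fR r1 r2 r3 - α * H| * |2*x - r1 - r2| := abs_mul _ _
      _ ≤ C * (4*ε) := mul_le_mul hc2R ht (abs_nonneg _) hC0.le
      _ ≤ A/4 := by have h : C*(4*ε) = 4*(ε*C) := by ring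
                    linarith
  have hderivqL : ∀ x ∈ interior (Set.Icc l1 r1), deriv (qL fL l1 l2 l3 α H) x < 0 := by
    intro x hx
    rw [interior_Icc] at hx
    have hd := hasDerivAt_quad (fL l1) (dd2 fL l1 l2) (dd3 fL l1 l2 l3 - α*H) l1 l2 x
    rw [hqLfun, hd.deriv]
    have h1 := hprodL x hx
    have h2 := abs_le.mp h1
    linarith [hc1L, hA0]
  have hderivqR : ∀ x ∈ interior (Set.Icc l1 r1), 0 < deriv (qR fR r1 r2 r3 α H) x := by
    intro x hx
    rw [interior_Icc] at hx
    have hd := hasDerivAt_quad (fR r1) (dd2 fR r1 r2) (dd3 fR r1 r2 r3 - α*H) r1 r2 x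
    rw [hqRfun, hd.deriv]
    have h1 := hprodR x hx
    have h2 := abs_le.mp h1
    linarith [hc1R', hA0]
  have hantiL : StrictAntiOn (qL fL l1 l2 l3 α H) (Set.Icc l1 r1) :=
    strictAntiOn_of_deriv_neg (convex_Icc _ _) hcontqL.continuousOn hderivqL
  have hmonoR : StrictMonoOn (qR fR r1 r2 r3 α H) (Set.Icc l1 r1) :=
    strictMonoOn_of_deriv_pos (convex_Icc _ _) hcontqR.continuousOn hderivqR
  refine ⟨hantiL, hmonoR, ?_⟩
  -- endpoint values
  have hqLl1 : qL fL l1 l2 l3 α H l1 = fL l1 := by simp [qL]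
  have hqRr1 : qR fR r1 r2 r3 α H r1 = fR r1 := by simp [qR]
  -- qL at r1 is below fL r1
  have hkeyL : fL r1 - qL fL l1 l2 l3 α H r1
      = (r1 - l1) * ((r1 - l2) * (dd3 fL l1 l2 r1 - (dd3 fL l1 l2 l3 - α * H))) := by
    rw [newton_id fL h21.ne' hl1r1.ne (h21.trans hl1r1).ne]
    simp only [qL]; ring
  have hqLr1lt : qL fL l1 l2 l3 α H r1 < fL r1 := by
    have hmv1 : ∃ ξ ∈ Set.Ioo l2 r1, dd3 fL l1 l2 r1 = deriv (deriv fL) ξ / 2 := by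
      obtain ⟨ξ, hξ, hξeq⟩ := dd3_mvt fL hfL h21 hl1r1
      exact ⟨ξ, hξ, by rw [dd3_swap12 fL h21.ne' hl1r1.ne (h21.trans hl1r1).ne]; exact hξeq⟩
    obtain ⟨ξ1, hξ1mem, hξ1eq⟩ := hmv1
    have hdiff : |deriv (deriv fL) ξ1 - deriv (deriv fL) ξL| ≤ ML * H := by
      have h1 := hLipL ξ1 ξL
      have h2 : |ξ1 - ξL| ≤ r1 - l3 := by
        rw [abs_le]
        have := hξ1mem.1; have := hξ1mem.2; have := hξLmem.1; have := hξLmem.2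
        constructor <;> linarith
      calc |deriv (deriv fL) ξ1 - deriv (deriv fL) ξL| ≤ ML * |ξ1 - ξL| := h1
        _ ≤ ML * (r1 - l3) := mul_le_mul_of_nonneg_left h2 hML
        _ ≤ ML * H := mul_le_mul_of_nonneg_left hH2 hML
    have hpos : 0 < dd3 fL l1 l2 r1 - (dd3 fL l1 l2 l3 - α * H) := by
      rw [hξ1eq, hξLeq]
      have h2 := abs_le.mp hdiff
      have hp := mul_pos (show (0:ℝ) < α - ML/2 by linarith) hHpos
      have hexp : (α - ML/2)*H = α*H - ML*H/2 := by ring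
      linarith
    have hfac := mul_pos (show (0:ℝ) < r1 - l1 by linarith)
      (mul_pos (show (0:ℝ) < r1 - l2 by linarith) hpos)
    linarith [hkeyL]
  -- qR at l1 is below fR l1
  have hkeyR : fR l1 - qR fR r1 r2 r3 α H l1
      = (l1 - r1) * ((l1 - r2) * (dd3 fR r1 r2 l1 - (dd3 fR r1 r2 r3 - α * H))) := by
    rw [newton_id fR h12.ne hl1r1.ne' (hl1r1.trans h12).ne']
    simp only [qR]; ring
  have hqRl1lt : qR fR r1 r2 r3 α H l1 < fR l1 := by
    have hmv1 : ∃ ξ ∈ Set.Ioo l1 r2, dd3 fR r1 r2 l1 = deriv (deriv fR) ξ / 2 := by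
      obtain ⟨ξ, hξ, hξeq⟩ := dd3_mvt fR hfR hl1r1 h12
      exact ⟨ξ, hξ, by rw [dd3_rot fR h12.ne hl1r1.ne' (hl1r1.trans h12).ne']; exact hξeq⟩
    obtain ⟨ξ1, hξ1mem, hξ1eq⟩ := hmv1
    have hdiff : |deriv (deriv fR) ξ1 - deriv (deriv fR) ξR| ≤ MR * H := by
      have h1 := hLipR ξ1 ξR
      have h2 : |ξ1 - ξR| ≤ r3 - l1 := by
        rw [abs_le]
        have := hξ1mem.1; have := hξ1mem.2; have := hξRmem.1; have := hξRmem.2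
        constructor <;> linarith
      calc |deriv (deriv fR) ξ1 - deriv (deriv fR) ξR| ≤ MR * |ξ1 - ξR| := h1
        _ ≤ MR * (r3 - l1) := mul_le_mul_of_nonneg_left h2 hMR
        _ ≤ MR * H := mul_le_mul_of_nonneg_left hH1 hMR
    have hpos : 0 < dd3 fR r1 r2 l1 - (dd3 fR r1 r2 r3 - α * H) := by
      rw [hξ1eq, hξReq]
      have h2 := abs_le.mp hdiff
      have hp := mul_pos (show (0:ℝ) < α - MR/2 by linarith) hHpos
      have hexp : (α - MR/2)*H = α*H - MR*H/2 := by ring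
      linarith
    have hfac : 0 < (l1 - r1) * ((l1 - r2) * (dd3 fR r1 r2 l1 - (dd3 fR r1 r2 r3 - α * H))) :=
      mul_pos_of_neg_of_neg (by linarith)
        (mul_neg_of_neg_of_pos (by linarith) hpos)
    linarith [hkeyR]
  -- ordering of endpoint values
  have hfRfL : fR l1 ≤ fL l1 := by
    have h1 := hf l1
    rw [hfl1] at h1
    exact le_max_right (fL l1) (fR l1) |>.trans h1.ge
  have hfLfR : fL r1 ≤ fR r1 := by
    have h1 := hf r1
    rw [hfr1] at h1
    exact le_max_left (fL r1) (fR r1) |>.trans h1.ge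
  have hgl1 : qR fR r1 r2 r3 α H l1 < qL fL l1 l2 l3 α H l1 := by
    rw [hqLl1]; linarith
  have hgr1 : qL fL l1 l2 l3 α H r1 < qR fR r1 r2 r3 α H r1 := by
    rw [hqRr1]; linarith
  -- unique crossing
  set g : ℝ → ℝ := fun y => qL fL l1 l2 l3 α H y - qR fR r1 r2 r3 α H y with hgdef
  have hcontg : Continuous g := hcontqL.sub hcontqR
  have hganti : StrictAntiOn g (Set.Icc l1 r1) := by
    intro u hu v hv huv
    have h1 := hantiL hu hv huv
    have h2 := hmonoR hu hv huv
    simp only [hgdef]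
    linarith
  have hsub : Set.Ioo l1 r1 ⊆ Set.Icc l1 r1 := Set.Ioo_subset_Icc_self
  have h0mem : (0:ℝ) ∈ Set.Ioo (g r1) (g l1) := by
    constructor
    · simp only [hgdef]; linarith
    · simp only [hgdef]; linarith
  obtain ⟨x, hxmem, hgx⟩ := intermediate_value_Ioo' hl1r1.le hcontg.continuousOn h0mem
  refine ⟨x, ⟨hxmem, sub_eq_zero.mp hgx⟩, ?_⟩
  rintro y ⟨hymem, hyeq⟩
  have hgy : g y = 0 := sub_eq_zero.mpr hyeq
  exact hganti.injOn (hsub hymem) (hsub hxmem) (by rw [hgy, hgx])
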